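/- arXiv:1612.03540 — 7 statements merged into one kernel-verified Lean document; each statement's English description precedes it below -/
import Mathlib

section
/- If f : [a,b] → ℝ is upper semi-continuous and left continuous, and f(a) < u < f(b), then there exists c ∈ (a,b) with f(c) = u. -/
/-- If `f : [a,b] → ℝ` is upper semi-continuous and left continuous, and
`f a < u < f b`, then there exists `c ∈ (a,b)` with `f c = u`. -/
theorem stmt0 (a b u : ℝ) (hab : a < b) (f : ℝ → ℝ)
    (husc : ∀ x ∈ Set.Icc a b, ∀ ε > (0:ℝ), ∃ δ > (0:ℝ),
      ∀ y ∈ Set.Icc a b, |y - x| < δ → f y < f x + ε)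
    (hlc : ∀ x ∈ Set.Ioc a b,
      Filter.Tendsto f (nhdsWithin x (Set.Ico a x)) (nhds (f x)))
    (hu : f a < u) (hub : u < f b) :
    ∃ c ∈ Set.Ioo a b, f c = u := by
  have hS : ∀ x ∈ {x | x ∈ Set.Icc a b ∧ f x < u}, x ≤ b := fun x hx => hx.1.2
  set S : Set ℝ := {x | x ∈ Set.Icc a b ∧ f x < u} with hSdef
  have haS : a ∈ S := ⟨⟨le_refl a, hab.le⟩, hu⟩
  have hne : S.Nonempty := ⟨a, haS⟩
  have hbdd : BddAbove S := ⟨b, hS⟩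
  obtain ⟨c, hc⟩ : ∃ c, c = sSup S := ⟨_, rfl⟩
  have hac : a ≤ c := hc ▸ le_csSup hbdd haS
  have hcb : c ≤ b := hc ▸ csSup_le hne hS
  -- a < c via USC at a
  have hlt_ac : a < c := by
    obtain ⟨δ, hδ, hδa⟩ := husc a ⟨le_refl a, hab.le⟩ (u - f a) (by linarith)
    obtain ⟨m, hm0, hm1, hm2⟩ : ∃ m, (0:ℝ) < m ∧ m ≤ δ/2 ∧ m ≤ (b-a)/2 :=
      ⟨min (δ/2) ((b-a)/2), lt_min (by linarith) (by linarith),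
        min_le_left _ _, min_le_right _ _⟩
    have hyIcc : a + m ∈ Set.Icc a b := ⟨by linarith, by linarith⟩
    have hyδ : |a + m - a| < δ := by rw [abs_of_pos (by linarith)]; linarith
    have hfy : f (a + m) < u := by have := hδa (a + m) hyIcc hyδ; linarith
    have hmem : a + m ∈ S := ⟨hyIcc, hfy⟩
    have := hc ▸ le_csSup hbdd hmem
    linarith
  -- f c ≥ u
  have hge : u ≤ f c := by
    by_contra h
    push_neg at h
    have hcb' : c < b := lt_of_le_of_ne hcb (by rintro rfl; linarith)
    obtain ⟨δ, hδ, hδc⟩ := husc c ⟨hac, hcb⟩ (u - f c) (by linarith)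
    obtain ⟨m, hm0, hm1, hm2⟩ : ∃ m, (0:ℝ) < m ∧ m ≤ δ/2 ∧ m ≤ (b-c)/2 :=
      ⟨min (δ/2) ((b-c)/2), lt_min (by linarith) (by linarith),
        min_le_left _ _, min_le_right _ _⟩
    have hyIcc : c + m ∈ Set.Icc a b := ⟨by linarith, by linarith⟩
    have hyδ : |c + m - c| < δ := by rw [abs_of_pos (by linarith)]; linarith
    have hfy : f (c + m) < u := by have := hδc (c + m) hyIcc hyδ; linarith
    have hmem : c + m ∈ S := ⟨hyIcc, hfy⟩
    have := hc ▸ le_csSup hbdd hmem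
    linarith
  -- f c ≤ u via left continuity
  have hle : f c ≤ u := by
    by_contra h
    push_neg at h
    have htend := hlc c ⟨hlt_ac, hcb⟩
    have hev : ∀ᶠ y in nhdsWithin c (Set.Ico a c), u < f y :=
      htend.eventually (eventually_gt_nhds h)
    rw [Filter.eventually_iff, Metric.mem_nhdsWithin_iff] at hev
    obtain ⟨δ, hδ, hδc⟩ := hev
    have hw : max a (c - δ/2) < c := max_lt hlt_ac (by linarith)
    obtain ⟨s, hsS, hws⟩ := exists_lt_of_lt_csSup hne (hc ▸ hw)
    rw [← hc] at hws
    have hsc : s ≤ c := hc ▸ le_csSup hbdd hsS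
    have hsc' : s < c := lt_of_le_of_ne hsc (by rintro rfl; exact absurd hsS.2 (by linarith))
    have hball : s ∈ Metric.ball c δ := by
      rw [Metric.mem_ball, Real.dist_eq, abs_of_nonpos (by linarith)]
      have := le_max_right a (c - δ/2)
      linarith
    have := hδc ⟨hball, hsS.1.1, hsc'⟩
    exact absurd hsS.2 (by simp at this ⊢; linarith)
  have hcb' : c < b := lt_of_le_of_ne hcb (by rintro rfl; linarith)
  exact ⟨c, ⟨hlt_ac, hcb'⟩, le_antisymm hle hge⟩
end

section
/- Let K ⊆ ℝ² be a compact set and L > 0 such that K is the image of a rectifiable curve of length L. Then for every ε > 0, the area (2-dimensional Lebesgue measure) of the ε-neighborhood of K is at most 2Lε + πε². -/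
/-!
For points `f t₀, …, f tₙ` of the curve taken with `t₀ < ⋯ < tₙ`, the polygonal line through them
has length at most the variation of `f`. The ε-tube of a single segment of length `l` is covered
by a `2l × 2ε` rectangle and two half-discs, so its area is at most `2lε + πε²`; attaching a new
segment at a point of a polygon adds at most `2lε`, since the ε-ball around the junction lies in
both tubes. As the tube of the curve is open, its area is the supremum of the areas of compact
subsets, each of which is covered by the ε-balls around finitely many points of the curve.
-/

open Set MeasureTheory Metric

theorem Isometry.preimage_thickening_image {X Y : Type*} [PseudoEMetricSpace X]
    [PseudoEMetricSpace Y] {Φ : X → Y} (hΦ : Isometry Φ) (δ : ℝ) (s : Set X) :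
    Φ ⁻¹' thickening δ (Φ '' s) = thickening δ s := by
  ext x
  simp [mem_thickening_iff_infEDist_lt, Metric.infEDist_image hΦ]

theorem Isometry.measure_thickening_image {X Y : Type*} [PseudoEMetricSpace X]
    [PseudoEMetricSpace Y] [MeasurableSpace X] [MeasurableSpace Y] [OpensMeasurableSpace Y]
    {μ : Measure X} {ν : Measure Y} {Φ : X → Y} (hΦ : Isometry Φ)
    (hm : MeasurePreserving Φ μ ν) (δ : ℝ) (s : Set X) :
    ν (thickening δ (Φ '' s)) = μ (thickening δ s) := by
  rw [← hm.measure_preimage isOpen_thickening.measurableSet.nullMeasurableSet,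
    hΦ.preimage_thickening_image]

namespace Complex

theorem volume_reProdIm (s t : Set ℝ) : volume (s ×ℂ t) = volume s * volume t := by
  rw [show s ×ℂ t = measurableEquivRealProd ⁻¹' (s ×ˢ t) from rfl,
    volume_preserving_equiv_real_prod.measure_preimage_equiv, Measure.volume_eq_prod,
    Measure.prod_prod]

theorem dist_le_dist_of_abs_re_sub_le {z p q : ℂ} (him : q.im = p.im)
    (hre : |z.re - q.re| ≤ |z.re - p.re|) : dist z q ≤ dist z p := by
  rw [dist_eq_re_im, dist_eq_re_im, him]
  exact Real.sqrt_le_sqrt (add_le_add_left (sq_le_sq.mpr hre) _)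

theorem thickening_segment_ofReal_subset {l : ℝ} (hl : 0 ≤ l) (ε : ℝ) :
    thickening ε (segment ℝ 0 (l : ℂ)) ⊆
      Icc 0 l ×ℂ Ioo (-ε) ε ∪ ball 0 ε ∩ re ⁻¹' Iio 0 ∪
        (· + -(l : ℂ)) ⁻¹' (ball 0 ε ∩ re ⁻¹' Ioi 0) := by
  intro z hz
  obtain ⟨p, hp, hzp⟩ := mem_thickening_iff.mp hz
  obtain ⟨x, hx0, hxl, rfl⟩ : ∃ x : ℝ, 0 ≤ x ∧ x ≤ l ∧ p = x := by
    rw [segment_eq_image] at hp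
    obtain ⟨t, ⟨ht0, ht1⟩, rfl⟩ := hp
    exact ⟨t * l, by positivity, by nlinarith, by simp⟩
  rcases lt_or_ge z.re 0 with hz0 | hz0
  · refine Or.inl (Or.inr ⟨?_, hz0⟩)
    refine (dist_le_dist_of_abs_re_sub_le (by simp) ?_).trans_lt hzp
    rw [zero_re, sub_zero, ofReal_re, abs_of_neg hz0, abs_of_neg (by linarith)]
    linarith
  rcases lt_or_ge l z.re with hzl | hzl
  · refine Or.inr ⟨?_, by simpa using hzl⟩
    change z + -(l : ℂ) ∈ ball 0 ε
    rw [mem_ball, ← sub_eq_add_neg, dist_zero_right, ← dist_eq_norm]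
    refine (dist_le_dist_of_abs_re_sub_le (by simp) ?_).trans_lt hzp
    rw [ofReal_re, ofReal_re, abs_of_pos (by linarith), abs_of_pos (by linarith)]
    linarith
  · refine Or.inl (Or.inl ⟨⟨hz0, hzl⟩, abs_lt.mp ?_⟩)
    calc |z.im| = |(z - x).im| := by simp
      _ ≤ ‖z - x‖ := abs_im_le_norm _
      _ < ε := by rwa [← dist_eq_norm]

theorem volume_thickening_segment_ofReal_le {l : ℝ} (hl : 0 ≤ l) (ε : ℝ) :
    volume (thickening ε (segment ℝ 0 (l : ℂ))) ≤
      ENNReal.ofReal (2 * l * ε) + volume (ball (0 : ℂ) ε) := by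
  set D := ball (0 : ℂ) ε
  have hrect : volume (Icc 0 l ×ℂ Ioo (-ε) ε) = ENNReal.ofReal (2 * l * ε) := by
    rw [volume_reProdIm, Real.volume_Icc, Real.volume_Ioo, ← ENNReal.ofReal_mul (by linarith)]
    ring_nf
  have hcaps : volume (D ∩ re ⁻¹' Iio 0) + volume (D ∩ re ⁻¹' Ioi 0) ≤ volume D := by
    have hdisj : Disjoint (D ∩ re ⁻¹' Iio 0) (D ∩ re ⁻¹' Ioi 0) :=
      (((Iic_disjoint_Ioi le_rfl).mono_left Iio_subset_Iic_self).preimage re).mono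
        inter_subset_right inter_subset_right
    rw [← measure_union hdisj (measurableSet_ball.inter (measurableSet_Ioi.preimage measurable_re))]
    exact measure_mono (union_subset inter_subset_left inter_subset_left)
  calc volume (thickening ε (segment ℝ 0 (l : ℂ)))
      ≤ volume (Icc 0 l ×ℂ Ioo (-ε) ε) + volume (D ∩ re ⁻¹' Iio 0) +
          volume ((· + -(l : ℂ)) ⁻¹' (D ∩ re ⁻¹' Ioi 0)) :=
        (measure_mono (thickening_segment_ofReal_subset hl ε)).trans
          ((measure_union_le _ _).trans (add_le_add_left (measure_union_le _ _) _))
    _ ≤ ENNReal.ofReal (2 * l * ε) + volume D := by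
        rw [measure_preimage_add_right, add_assoc, hrect]
        exact add_le_add_right hcaps _

theorem volume_thickening_segment_le (a b : ℂ) (ε : ℝ) :
    volume (thickening ε (segment ℝ a b)) ≤
      ENNReal.ofReal (2 * dist a b * ε) + volume (ball (0 : ℂ) ε) := by
  set ρ := rotation (Circle.exp (arg (b - a)))
  set Φ : ℂ → ℂ := fun z ↦ a + ρ z
  have hρ : ρ (dist a b : ℂ) = b - a := by
    rw [rotation_apply, Circle.coe_exp, dist_comm, dist_eq_norm, mul_comm,
      norm_mul_exp_arg_mul_I]
  have hseg : Φ '' segment ℝ 0 (dist a b : ℂ) = segment ℝ a b := by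
    rw [segment_eq_image', segment_eq_image', image_image]
    refine image_congr fun θ _ ↦ ?_
    simp only [Φ, sub_zero, zero_add, map_smul, hρ]
  have hΦ : Isometry Φ := (IsometryEquiv.addLeft a).isometry.comp ρ.isometry
  have hmp : MeasurePreserving Φ volume volume :=
    (measurePreserving_add_left volume a).comp ρ.measurePreserving
  rw [← hseg, hΦ.measure_thickening_image hmp]
  exact volume_thickening_segment_ofReal_le dist_nonneg ε

theorem volume_thickening_union_segment_le {P : Set ℂ} {p : ℂ} (hp : p ∈ P) (q : ℂ) (ε : ℝ) :
    volume (thickening ε (P ∪ segment ℝ p q)) ≤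
      volume (thickening ε P) + ENNReal.ofReal (2 * dist p q * ε) := by
  set A := thickening ε P
  set B := thickening ε (segment ℝ p q)
  have hball : ball p ε ⊆ A ∩ B :=
    subset_inter (ball_subset_thickening hp ε) (ball_subset_thickening (left_mem_segment ℝ p q) ε)
  have hB : volume B ≤ ENNReal.ofReal (2 * dist p q * ε) + volume (A ∩ B) := by
    refine (volume_thickening_segment_le p q ε).trans (add_le_add_right ?_ _)
    rw [← Measure.addHaar_ball_center volume p]
    exact measure_mono hball
  have hAB_ne_top : volume (A ∩ B) ≠ ⊤ :=
    (measure_mono inter_subset_right |>.trans_lt <|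
      (volume_thickening_segment_le p q ε).trans_lt <|
        ENNReal.add_lt_top.mpr ⟨ENNReal.ofReal_lt_top, measure_ball_lt_top⟩).ne
  rw [thickening_union]
  refine ENNReal.le_of_add_le_add_right hAB_ne_top ?_
  calc volume (A ∪ B) + volume (A ∩ B) = volume A + volume B :=
        measure_union_add_inter A isOpen_thickening.measurableSet
    _ ≤ volume A + ENNReal.ofReal (2 * dist p q * ε) + volume (A ∩ B) := by
        rw [add_assoc]; exact add_le_add_right hB _

end Complex

theorem eVariationOn_inter_Iic_add_edist_le {α E : Type*} [LinearOrder α] [PseudoEMetricSpace E]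
    (f : α → E) {s : Set α} {a b : α} (hb : b ∈ s) (ha : a ∈ s) (hba : b ≤ a) :
    eVariationOn f (s ∩ Iic b) + edist (f b) (f a) ≤ eVariationOn f (s ∩ Iic a) := by
  have hpair : ({b, a} : Set α) ⊆ s ∩ Iic a := by
    rintro x (rfl | rfl)
    exacts [⟨hb, hba⟩, ⟨ha, le_rfl⟩]
  calc eVariationOn f (s ∩ Iic b) + edist (f b) (f a)
      ≤ eVariationOn f (s ∩ Iic b) + eVariationOn f {b, a} :=
        add_le_add_right
          (eVariationOn.edist_le f (mem_insert b {a}) (mem_insert_of_mem b (mem_singleton a))) _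
    _ ≤ eVariationOn f (s ∩ Iic b ∪ {b, a}) := by
        refine eVariationOn.add_le_union f fun x hx y hy ↦ ?_
        rcases hy with rfl | rfl
        exacts [hx.2, hx.2.trans hba]
    _ ≤ eVariationOn f (s ∩ Iic a) :=
        eVariationOn.mono f
          (union_subset (inter_subset_inter_right s (Iic_subset_Iic.mpr hba)) hpair)

theorem exists_superset_image_volume_thickening_le {α : Type*} [LinearOrder α] (f : α → ℂ)
    {s : Set α} (ε : ℝ) (T : Finset α) {a : α} (ha : a ∈ s) (hTs : ↑T ⊆ s)
    (hTa : ∀ t ∈ T, t ≤ a) :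
    ∃ P : Set ℂ, f '' T ⊆ P ∧ f a ∈ P ∧
      volume (thickening ε P) ≤
        volume (ball (0 : ℂ) ε) + 2 * ENNReal.ofReal ε * eVariationOn f (s ∩ Iic a) := by
  classical
  induction T using Finset.induction_on_max generalizing a with
  | empty =>
    refine ⟨{f a}, by simp, rfl, ?_⟩
    rw [thickening_singleton, Measure.addHaar_ball_center]
    exact le_self_add
  | insert b T hTb ih =>
    have hb : b ∈ s := hTs (Finset.mem_insert_self b T)
    have hba : b ≤ a := hTa b (Finset.mem_insert_self b T)
    obtain ⟨P, hTP, hbP, hP⟩ := ih hb (fun t ht ↦ hTs (Finset.mem_insert_of_mem ht))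
      fun t ht ↦ (hTb t ht).le
    refine ⟨P ∪ segment ℝ (f b) (f a), ?_, Or.inr (right_mem_segment ℝ _ _), ?_⟩
    · rw [Finset.coe_insert, image_insert_eq, insert_subset_iff]
      exact ⟨Or.inl hbP, hTP.trans subset_union_left⟩
    have hseg : ENNReal.ofReal (2 * dist (f b) (f a) * ε) =
        2 * ENNReal.ofReal ε * edist (f b) (f a) := by
      rw [edist_dist, ENNReal.ofReal_mul (by positivity), ENNReal.ofReal_mul zero_le_two,
        ENNReal.ofReal_ofNat]
      ring
    calc volume (thickening ε (P ∪ segment ℝ (f b) (f a)))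
        ≤ volume (thickening ε P) + ENNReal.ofReal (2 * dist (f b) (f a) * ε) :=
          Complex.volume_thickening_union_segment_le hbP _ ε
      _ ≤ volume (ball (0 : ℂ) ε) + 2 * ENNReal.ofReal ε *
            (eVariationOn f (s ∩ Iic b) + edist (f b) (f a)) := by
          rw [hseg, mul_add, ← add_assoc]
          exact add_le_add_left hP _
      _ ≤ volume (ball (0 : ℂ) ε) + 2 * ENNReal.ofReal ε * eVariationOn f (s ∩ Iic a) := by
          gcongr
          exact eVariationOn_inter_Iic_add_edist_le f hb ha hba

theorem volume_thickening_image_le {α : Type*} [LinearOrder α] (f : α → ℂ) (s : Set α) (ε : ℝ) :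
    volume (thickening ε (f '' s)) ≤
      volume (ball (0 : ℂ) ε) + 2 * ENNReal.ofReal ε * eVariationOn f s := by
  rw [isOpen_thickening.measure_eq_iSup_isCompact]
  refine iSup₂_le fun C hC ↦ iSup_le fun hCc ↦ ?_
  rw [thickening_eq_biUnion_ball, biUnion_image] at hC
  obtain ⟨T, hTs, hT, hCT⟩ := hCc.elim_finite_subcover_image (fun _ _ ↦ isOpen_ball) hC
  rcases T.eq_empty_or_nonempty with rfl | hTne
  · simp_all
  obtain ⟨a, haT, hmax⟩ := T.exists_max_image id hT hTne
  obtain ⟨P, hTP, -, hP⟩ := exists_superset_image_volume_thickening_le f ε hT.toFinset (hTs haT)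
    (by simpa using hTs) (by simpa using hmax)
  have hCP : C ⊆ thickening ε P := hCT.trans <| iUnion₂_subset fun t ht ↦
    ball_subset_thickening (hTP ⟨t, by simpa using ht, rfl⟩) ε
  calc volume C ≤ volume (thickening ε P) := measure_mono hCP
    _ ≤ volume (ball (0 : ℂ) ε) + 2 * ENNReal.ofReal ε * eVariationOn f (s ∩ Iic a) := hP
    _ ≤ volume (ball (0 : ℂ) ε) + 2 * ENNReal.ofReal ε * eVariationOn f s := by
        gcongr
        exact eVariationOn.mono f inter_subset_left

theorem stmt5_general (K : Set ℂ) (L : ℝ) (hL : 0 < L)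
    (γ : ℝ → ℂ) (him : γ '' Icc 0 1 = K)
    (hlen : eVariationOn γ (Icc 0 1) = ENNReal.ofReal L)
    (ε : ℝ) (hε : 0 < ε) :
    volume (Metric.thickening ε K) ≤ ENNReal.ofReal (2 * L * ε + Real.pi * ε ^ 2) := by
  calc volume (thickening ε K)
      ≤ volume (ball (0 : ℂ) ε) + 2 * ENNReal.ofReal ε * eVariationOn γ (Icc 0 1) :=
        him ▸ volume_thickening_image_le γ (Icc 0 1) ε
    _ = ENNReal.ofReal (2 * L * ε + Real.pi * ε ^ 2) := by
        rw [hlen, Complex.volume_ball, ← ENNReal.ofReal_pow hε.le, ← ENNReal.ofReal_coe_nnreal,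
          NNReal.coe_real_pi, ENNReal.ofReal_add (by positivity) (by positivity),
          ENNReal.ofReal_mul (by positivity), ENNReal.ofReal_mul zero_le_two,
          ENNReal.ofReal_mul Real.pi_pos.le, ENNReal.ofReal_ofNat]
        ring

/-- Hotelling's inequality: if `K ⊆ ℝ²` is the image of a rectifiable curve of
length `L > 0`, then the ε-neighborhood of `K` has area at most `2Lε + πε²`. -/
theorem stmt5 (K : Set ℂ) (hK : IsCompact K) (L : ℝ) (hL : 0 < L)
    (γ : ℝ → ℂ) (hγ : ContinuousOn γ (Icc 0 1)) (him : γ '' Icc 0 1 = K)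
    (hlen : eVariationOn γ (Icc 0 1) = ENNReal.ofReal L)
    (ε : ℝ) (hε : 0 < ε) :
    volume (Metric.thickening ε K) ≤ ENNReal.ofReal (2 * L * ε + Real.pi * ε ^ 2) :=
  stmt5_general K L hL γ him hlen ε hε
end

section
/- Let D ⊆ ℝ² be a compact set, f : [0,1] × [0,1] → D continuous, γ : [0,t₀] → D continuous with γ(t') ∉ f([0,1] × {t'}) for all t' ∈ [0,t₀], and let β : [0,1] → D \ f([0,1] × {t₀}) be a continuous path with β(0) = γ(t₀). Then there exists a continuous path γ̃ : [0,t₀] → D with γ̃(t₀) = β(1) and γ̃(t') ∉ f([0,1] × {t'}) for all t' ∈ [0,t₀]. -/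
/-!
The graph of `γ` together with `{t₀} × β([0,1])` is a compact subset of `ℝ × ℂ` disjoint from
the compact spacetime region `{(t, f s t)}` swept by the sensor, hence at some distance `δ > 0`
from it. The new path follows `γ` until time `t₀ - δ/2` and then, during the remaining time,
runs inside `γ([t₀ - δ/2, t₀]) ∪ β([0,1])`, which is path-connected since `β 0 = γ t₀`. Each of
its points is then a time shift by less than `δ` of a point of that compact set, so the sensor
never sees it.
-/

open Set

variable {X : Type*}

theorem exists_continuousOn_lagging_concat [TopologicalSpace X] {γ β : ℝ → X} {t₀ δ : ℝ}
    (ht₀ : 0 ≤ t₀) (hδ : 0 < δ) (hγ : ContinuousOn γ (Icc 0 t₀)) (hβ : ContinuousOn β (Icc 0 1))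
    (hβ0 : β 0 = γ t₀) :
    ∃ γ' : ℝ → X, ContinuousOn γ' (Icc 0 t₀) ∧ γ' t₀ = β 1 ∧
      ∀ t ∈ Icc 0 t₀, (∃ u ∈ Icc 0 t₀, |t - u| < δ ∧ γ' t = γ u) ∨
        (|t - t₀| < δ ∧ γ' t ∈ β '' Icc 0 1) := by
  set c := t₀ - δ / 2 with hc
  set c' := max c 0 with hc'_def
  have hc' : c' ∈ Icc 0 t₀ := ⟨le_max_right _ _, max_le (by linarith) ht₀⟩
  set W := γ '' Icc c' t₀ ∪ β '' Icc 0 1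
  have hW : IsPathConnected W :=
    (((convex_Icc _ _).isPathConnected (nonempty_Icc.2 hc'.2)).image'
        (hγ.mono (Icc_subset_Icc_left hc'.1))).union
      (((convex_Icc _ _).isPathConnected (nonempty_Icc.2 zero_le_one)).image' hβ)
      ⟨γ t₀, mem_image_of_mem _ (right_mem_Icc.2 hc'.2),
        hβ0 ▸ mem_image_of_mem _ (left_mem_Icc.2 zero_le_one)⟩
  have hjoin : JoinedIn W (γ c') (β 1) :=
    hW.joinedIn _ (Or.inl (mem_image_of_mem _ (left_mem_Icc.2 hc'.2)))
      _ (Or.inr (mem_image_of_mem _ (right_mem_Icc.2 zero_le_one)))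
  set P := hjoin.somePath
  refine ⟨fun t => if t < c then γ t else P.extend ((t - c) / (t₀ - c)), ?_, ?_, ?_⟩
  · refine ContinuousOn.if ?_ (hγ.mono inter_subset_left)
      (P.continuous_extend.comp_continuousOn (by fun_prop))
    rintro t ⟨ht, htc⟩
    rw [show {t | t < c} = Iio c from rfl, frontier_Iio, mem_singleton_iff] at htc
    subst htc
    rw [sub_self, zero_div, P.extend_zero, hc'_def, max_eq_left ht.1]
  · simp only [show ¬t₀ < c by linarith, if_false]
    rw [div_self (by linarith), P.extend_one]
  · intro t ht
    by_cases htc : t < c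
    · exact Or.inl ⟨t, ht, by simpa using hδ, if_pos htc⟩
    · have hP : P.extend ((t - c) / (t₀ - c)) ∈ W := by
        obtain ⟨s, hs⟩ := P.extend_range ▸ mem_range_self ((t - c) / (t₀ - c))
        exact hs ▸ hjoin.somePath_mem s
      simp only [htc, if_false]
      rcases hP with ⟨u, hu, hu'⟩ | hr
      · refine Or.inl ⟨u, ⟨hc'.1.trans hu.1, hu.2⟩, ?_, hu'.symm⟩
        rw [abs_sub_lt_iff]
        constructor <;> linarith [le_max_left c 0, hu.1, hu.2, ht.2, not_lt.1 htc]
      · refine Or.inr ⟨?_, hr⟩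
        rw [abs_sub_lt_iff]
        constructor <;> linarith [ht.2, not_lt.1 htc]

theorem IsCompact.exists_pos_forall_shift_fst_notMem [PseudoMetricSpace X] {K S : Set (ℝ × X)}
    (hK : IsCompact K) (hS : IsClosed S) (hKS : Disjoint K S) :
    ∃ δ > 0, ∀ p ∈ K, ∀ t, |t - p.1| < δ → (t, p.2) ∉ S := by
  obtain ⟨δ, hδ, hthick⟩ :=
    hK.exists_thickening_subset_open hS.isOpen_compl (subset_compl_iff_disjoint_right.2 hKS)
  refine ⟨δ, hδ, fun p hp t ht => hthick (Metric.mem_thickening_iff.2 ⟨p, hp, ?_⟩)⟩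
  simpa [Prod.dist_eq, Real.dist_eq] using ht

def sensorRegion (f : ℝ → ℝ → X) : Set (ℝ × X) :=
  (fun q : ℝ × ℝ => (q.2, f q.1 q.2)) '' Icc 0 1 ×ˢ Icc 0 1

theorem mem_sensorRegion {f : ℝ → ℝ → X} {t : ℝ} {z : X} :
    (t, z) ∈ sensorRegion f ↔ t ∈ Icc 0 1 ∧ z ∈ (fun s => f s t) '' Icc 0 1 := by
  constructor
  · rintro ⟨⟨s, t⟩, ⟨hs, ht⟩, h⟩
    simp only [Prod.mk.injEq] at h
    obtain ⟨rfl, rfl⟩ := h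
    exact ⟨ht, s, hs, rfl⟩
  · rintro ⟨ht, s, hs, rfl⟩
    exact ⟨(s, t), ⟨hs, ht⟩, rfl⟩

theorem isCompact_sensorRegion [TopologicalSpace X] {f : ℝ → ℝ → X}
    (hf : ContinuousOn (fun q : ℝ × ℝ => f q.1 q.2) (Icc 0 1 ×ˢ Icc 0 1)) :
    IsCompact (sensorRegion f) :=
  (isCompact_Icc.prod isCompact_Icc).image_of_continuousOn (continuous_snd.continuousOn.prodMk hf)

theorem stmt9_general (D : Set ℂ) (f : ℝ → ℝ → ℂ)
    (hf : ContinuousOn (fun q : ℝ × ℝ => f q.1 q.2) (Icc 0 1 ×ˢ Icc 0 1))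
    (t₀ : ℝ) (ht₀ : t₀ ∈ Icc (0:ℝ) 1)
    (γ : ℝ → ℂ) (hγ : ContinuousOn γ (Icc 0 t₀)) (hγD : ∀ t' ∈ Icc 0 t₀, γ t' ∈ D)
    (hev : ∀ t' ∈ Icc 0 t₀, γ t' ∉ (fun s => f s t') '' Icc 0 1)
    (β : ℝ → ℂ) (hβ : ContinuousOn β (Icc 0 1))
    (hβD : ∀ r ∈ Icc (0:ℝ) 1, β r ∈ D \ (fun s => f s t₀) '' Icc 0 1)
    (hβ0 : β 0 = γ t₀) :
    ∃ γ' : ℝ → ℂ, ContinuousOn γ' (Icc 0 t₀) ∧ (∀ t' ∈ Icc 0 t₀, γ' t' ∈ D) ∧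
      γ' t₀ = β 1 ∧ ∀ t' ∈ Icc 0 t₀, γ' t' ∉ (fun s => f s t') '' Icc 0 1 := by
  set K := (fun u => (u, γ u)) '' Icc 0 t₀ ∪ (fun r => (t₀, β r)) '' Icc 0 1
  have hK : IsCompact K :=
    (isCompact_Icc.image_of_continuousOn (continuousOn_id.prodMk hγ)).union
      (isCompact_Icc.image_of_continuousOn (continuousOn_const.prodMk hβ))
  have hKS : Disjoint K (sensorRegion f) := by
    refine disjoint_left.2 ?_
    rintro _ (⟨u, hu, rfl⟩ | ⟨r, hr, rfl⟩) hS
    exacts [hev u hu (mem_sensorRegion.1 hS).2, (hβD r hr).2 (mem_sensorRegion.1 hS).2]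
  obtain ⟨δ, hδ, hmargin⟩ :=
    hK.exists_pos_forall_shift_fst_notMem (isCompact_sensorRegion hf).isClosed hKS
  obtain ⟨γ', hγ'c, hγ'end, htrack⟩ :=
    exists_continuousOn_lagging_concat ht₀.1 hδ hγ hβ hβ0
  refine ⟨γ', hγ'c, fun t ht => ?_, hγ'end, fun t ht hmem => ?_⟩ <;>
    rcases htrack t ht with ⟨u, hu, htu, hγ'u⟩ | ⟨htt₀, r, hr, hγ'r⟩
  · exact hγ'u ▸ hγD u hu
  · exact hγ'r ▸ (hβD r hr).1
  · rw [hγ'u] at hmem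
    exact hmargin (u, γ u) (Or.inl ⟨u, hu, rfl⟩) t htu
      (mem_sensorRegion.2 ⟨Icc_subset_Icc_right ht₀.2 ht, hmem⟩)
  · rw [← hγ'r] at hmem
    exact hmargin (t₀, β r) (Or.inr ⟨r, hr, rfl⟩) t htt₀
      (mem_sensorRegion.2 ⟨Icc_subset_Icc_right ht₀.2 ht, hmem⟩)

/-- If an intruder `γ` evades the sensor curve `f` up to time `t₀`, and
`β` is a path from `γ t₀` avoiding the sensor image at time `t₀`, then there
is an evasion path up to time `t₀` ending at `β 1`. -/
theorem stmt9 (D : Set ℂ) (hD : IsCompact D) (f : ℝ → ℝ → ℂ)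
    (hf : ContinuousOn (fun q : ℝ × ℝ => f q.1 q.2) (Icc 0 1 ×ˢ Icc 0 1))
    (hfD : ∀ s ∈ Icc (0:ℝ) 1, ∀ t ∈ Icc (0:ℝ) 1, f s t ∈ D)
    (t₀ : ℝ) (ht₀ : t₀ ∈ Icc (0:ℝ) 1)
    (γ : ℝ → ℂ) (hγ : ContinuousOn γ (Icc 0 t₀)) (hγD : ∀ t' ∈ Icc 0 t₀, γ t' ∈ D)
    (hev : ∀ t' ∈ Icc 0 t₀, γ t' ∉ (fun s => f s t') '' Icc 0 1)
    (β : ℝ → ℂ) (hβ : ContinuousOn β (Icc 0 1))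
    (hβD : ∀ r ∈ Icc (0:ℝ) 1, β r ∈ D \ (fun s => f s t₀) '' Icc 0 1)
    (hβ0 : β 0 = γ t₀) :
    ∃ γ' : ℝ → ℂ, ContinuousOn γ' (Icc 0 t₀) ∧ (∀ t' ∈ Icc 0 t₀, γ' t' ∈ D) ∧
      γ' t₀ = β 1 ∧ ∀ t' ∈ Icc 0 t₀, γ' t' ∉ (fun s => f s t') '' Icc 0 1 :=
  stmt9_general D f hf t₀ ht₀ γ hγ hγD hev β hβ hβD hβ0
end

section
/- Let D ⊆ ℝ² be compact and f : [0,1] × [0,1] → D continuous. For t ∈ [0,1] define the contaminated region C(t) = {x ∈ D : there exists continuous γ : [0,t] → D with γ(t) = x and γ(t') ∉ f([0,1] × {t'}) for all t' ∈ [0,t]}. Then C(t) is open in D (and its complement U(t) = D \ C(t) is closed in D). -/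
/-!
Let `γ` witness `x ∈ C(t)`. The graph of `γ` and the space-time set swept by the sensor are
disjoint compact sets, hence at some distance `m > 0`: `γ w` stays `m` away from the sensor at
all times within `m` of `w`; in particular the sensor stays `m` away from `x = γ t` during the
last `m` units of time. A point `y ∈ D` close to `x` is either never covered by the sensor (then
the constant path works), or `y = f p` for a parameter `p` close to some `q` with `f q = x`, by
compactness of the parameter square. By uniform continuity the image of the segment from `q` to
`p` is then a path in `D` from `x` to `y` staying within `m` of `x`; following `γ` until just
before time `t` and then this path avoids the sensor.
-/

open Set Metric Topology

lemma exists_isOpen_inter_eq_of_forall_mem_nhdsWithin {X : Type*} [TopologicalSpace X]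
    {C D : Set X} (hCD : C ⊆ D) (h : ∀ x ∈ C, C ∈ 𝓝[D] x) :
    ∃ V : Set X, IsOpen V ∧ C = V ∩ D := by
  refine ⟨interior (C ∪ Dᶜ), isOpen_interior,
    Subset.antisymm (fun x hx => ⟨?_, hCD hx⟩) fun x ⟨hxV, hxD⟩ => ?_⟩
  · rw [mem_interior_iff_mem_nhds]
    filter_upwards [mem_nhdsWithin_iff_eventually.1 (h x hx)] with y hy
    exact (imp_iff_not_or.1 hy).symm
  · exact (interior_subset hxV).resolve_right (not_not_intro hxD)

lemma IsCompact.exists_pos_forall_exists_mem_fiber_dist_lt {α β : Type*} [PseudoMetricSpace α]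
    [MetricSpace β] {Q : Set α} (hQ : IsCompact Q) {g : α → β} (hg : ContinuousOn g Q)
    (x : β) {r : ℝ} (hr : 0 < r) :
    ∃ ρ > 0, ∀ p ∈ Q, dist (g p) x < ρ → ∃ q ∈ Q, g q = x ∧ dist p q < r := by
  set far := Q ∩ ⋂ q ∈ {q ∈ Q | g q = x}, {p | r ≤ dist p q}
  have hfar : IsCompact far := hQ.inter_right <|
    isClosed_biInter fun q _ => isClosed_le continuous_const (continuous_id.dist continuous_const)
  have hx : x ∉ g '' far := by
    rintro ⟨p, ⟨hp, hpfar⟩, rfl⟩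
    have : r ≤ dist p p := mem_iInter₂.1 hpfar p ⟨hp, rfl⟩
    linarith [dist_self p]
  obtain ⟨ρ, hρ, hball⟩ := Metric.isOpen_iff.1
    (hfar.image_of_continuousOn (hg.mono inter_subset_left)).isClosed.isOpen_compl x hx
  refine ⟨ρ, hρ, fun p hp hpx => ?_⟩
  by_contra! hno
  exact hball (mem_ball.2 hpx) ⟨p, ⟨hp, mem_iInter₂.2 fun q hq => hno q hq.1 hq.2⟩, rfl⟩

lemma exists_pos_le_dist_of_forall_notMem_image {ι E : Type*} [TopologicalSpace ι]
    [MetricSpace E] {S : Set ι} (hS : IsCompact S) {f : ι → ℝ → E} {t : ℝ}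
    (hf : ContinuousOn (fun q : ι × ℝ => f q.1 q.2) (S ×ˢ Icc 0 t))
    {γ : ℝ → E} (hγ : ContinuousOn γ (Icc 0 t))
    (havoid : ∀ a ∈ Icc 0 t, γ a ∉ (fun s => f s a) '' S) :
    ∃ m > 0, ∀ w ∈ Icc 0 t, ∀ a ∈ Icc 0 t, ∀ s ∈ S,
      |w - a| < m → m ≤ dist (γ w) (f s a) := by
  set graph : Set (ℝ × E) := (fun a => (a, γ a)) '' Icc 0 t
  set sweep : Set (ℝ × E) := (fun q : ι × ℝ => (q.2, f q.1 q.2)) '' (S ×ˢ Icc 0 t)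
  have hgraph : IsCompact graph :=
    isCompact_Icc.image_of_continuousOn (continuousOn_id.prodMk hγ)
  have hsweep : IsCompact sweep :=
    (hS.prod isCompact_Icc).image_of_continuousOn (continuous_snd.continuousOn.prodMk hf)
  have hdisj : Disjoint graph sweep := by
    rw [disjoint_left]
    rintro _ ⟨a, ha, rfl⟩ ⟨⟨s, a'⟩, ⟨hs, -⟩, heq⟩
    obtain ⟨rfl, h⟩ := Prod.mk.inj heq
    exact havoid _ ha ⟨s, hs, h⟩
  obtain ⟨m, hm, hlt⟩ := exists_pos_forall_lt_edist hgraph hsweep.isClosed hdisj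
  refine ⟨m, by exact_mod_cast hm, fun w hw a ha s hs hwa => ?_⟩
  have h := hlt _ ⟨w, hw, rfl⟩ _ ⟨(s, a), ⟨hs, ha⟩, rfl⟩
  rw [edist_nndist, ENNReal.coe_lt_coe, ← NNReal.coe_lt_coe, coe_nndist, Prod.dist_eq,
    Real.dist_eq] at h
  rcases lt_max_iff.1 h with h | h
  · linarith
  · exact h.le

lemma exists_continuousOn_follow_then_path {X : Type*} [TopologicalSpace X] {γ : ℝ → X}
    {t δ : ℝ} (ht : 0 ≤ t) (hδ : 0 < δ) (hγ : ContinuousOn γ (Icc 0 t)) {y : X}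
    (β : Path (γ t) y) :
    ∃ η : ℝ → X, ContinuousOn η (Icc 0 t) ∧ η t = y ∧ ∀ a ∈ Icc 0 t,
      (∃ w ∈ Icc 0 t, |w - a| < δ ∧ η a = γ w) ∨ (t - a < δ ∧ η a ∈ range β) := by
  set γ' : ℝ → X := fun a => γ (projIcc 0 t ht a)
  have hγ' : Continuous γ' := hγ.comp_continuous
    (continuous_subtype_val.comp continuous_projIcc) fun a => (projIcc 0 t ht a).2
  -- `γ` is run on `[0, t - δ / 2]`, sped up on its last stretch so as to arrive at time `t`,
  -- and `β` is run on `[t - δ / 2, t]`.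
  set s := t - δ / 2
  have hγ'_eq {w : ℝ} (hw : w ∈ Icc 0 t) : γ' w = γ w := by simp [γ', projIcc_of_mem ht hw]
  refine ⟨fun a => if a ≤ s then γ' (a + max 0 (a - t + δ)) else β.extend ((a - s) / (δ / 2)),
    Continuous.continuousOn ?_, ?_, fun a ha => ?_⟩
  · refine Continuous.if_le (hγ'.comp (by fun_prop)) (β.continuous_extend.comp (by fun_prop))
      continuous_id continuous_const fun a ha => ?_
    have : a + max 0 (a - t + δ) = t := by simp only [ha, s]; rw [max_eq_right] <;> linarith
    rw [this, hγ'_eq ⟨ht, le_rfl⟩, ha, sub_self, zero_div, β.extend_zero]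
  · simp [show ¬ t ≤ s by simp only [s]; linarith, s, hδ.ne']
  · by_cases has : a ≤ s
    · have hmax : max 0 (a - t + δ) ≤ δ / 2 := max_le (by linarith) (by simp only [s] at has; linarith)
      have hw : a + max 0 (a - t + δ) ∈ Icc 0 t :=
        ⟨by linarith [ha.1, le_max_left 0 (a - t + δ)], by simp only [s] at has; linarith⟩
      refine Or.inl ⟨_, hw, ?_, by simp only [has, if_true, hγ'_eq hw]⟩
      rw [add_sub_cancel_left, abs_of_nonneg (le_max_left _ _)]
      linarith
    · refine Or.inr ⟨by simp only [s] at has; linarith, ?_⟩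
      simp only [has, if_false, ← β.extend_range]
      exact mem_range_self _

lemma exists_avoiding_path_of_joinedIn {ι E : Type*} [MetricSpace E] {D : Set E} {S : Set ι}
    {f : ι → ℝ → E} {t m : ℝ} (ht : 0 ≤ t) (hm : 0 < m) {γ : ℝ → E}
    (hγ : ContinuousOn γ (Icc 0 t)) (hγD : ∀ a ∈ Icc 0 t, γ a ∈ D)
    (hsep : ∀ w ∈ Icc 0 t, ∀ a ∈ Icc 0 t, ∀ s ∈ S, |w - a| < m → m ≤ dist (γ w) (f s a))
    {y : E} (hy : JoinedIn (D ∩ ball (γ t) m) (γ t) y) :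
    ∃ η : ℝ → E, ContinuousOn η (Icc 0 t) ∧ (∀ a ∈ Icc 0 t, η a ∈ D) ∧ η t = y ∧
      ∀ a ∈ Icc 0 t, η a ∉ (fun s => f s a) '' S := by
  obtain ⟨β, hβ⟩ := hy
  obtain ⟨η, hη, hηt, hηa⟩ := exists_continuousOn_follow_then_path ht hm hγ β
  refine ⟨η, hη, fun a ha => ?_, hηt, ?_⟩
  · rcases hηa a ha with ⟨w, hw, -, hηw⟩ | ⟨-, u, hu⟩
    · exact hηw ▸ hγD w hw
    · exact hu ▸ (hβ u).1
  · rintro a ha ⟨s, hs, hfs : f s a = η a⟩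
    rcases hηa a ha with ⟨w, hw, hwa, hηw⟩ | ⟨hta, u, hu⟩
    · have h := hsep w hw a ha s hs hwa
      rw [hfs, hηw, dist_self] at h
      linarith
    · have h := hsep t ⟨ht, le_rfl⟩ a ha s hs (by rwa [abs_of_nonneg (sub_nonneg.2 ha.2)])
      rw [hfs, ← hu, dist_comm] at h
      linarith [mem_ball.1 (hβ u).2]

theorem stmt10_general (D : Set ℂ) (f : ℝ → ℝ → ℂ)
    (hf : ContinuousOn (fun q : ℝ × ℝ => f q.1 q.2) (Icc 0 1 ×ˢ Icc 0 1))
    (hfD : ∀ s ∈ Icc (0:ℝ) 1, ∀ t ∈ Icc (0:ℝ) 1, f s t ∈ D)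
    (t : ℝ) (ht : t ∈ Icc (0:ℝ) 1) :
    ∃ V : Set ℂ, IsOpen V ∧
      {x ∈ D | ∃ γ : ℝ → ℂ, ContinuousOn γ (Icc 0 t) ∧ (∀ t' ∈ Icc 0 t, γ t' ∈ D) ∧
        γ t = x ∧ ∀ t' ∈ Icc 0 t, γ t' ∉ (fun s => f s t') '' Icc 0 1} = V ∩ D := by
  have hQ : IsCompact (Icc (0:ℝ) 1 ×ˢ Icc (0:ℝ) 1) := isCompact_Icc.prod isCompact_Icc
  refine exists_isOpen_inter_eq_of_forall_mem_nhdsWithin (fun x hx => hx.1) ?_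
  rintro _ ⟨-, γ, hγ, hγD, rfl, hγavoid⟩
  obtain ⟨m, hm, hsep⟩ := exists_pos_le_dist_of_forall_notMem_image isCompact_Icc
    (hf.mono (prod_mono_right (Icc_subset_Icc_right ht.2))) hγ hγavoid
  obtain ⟨r, hr, hfr⟩ :=
    Metric.uniformContinuousOn_iff.1 (hQ.uniformContinuousOn_of_continuous hf) m hm
  obtain ⟨ρ, hρ, hfiber⟩ := hQ.exists_pos_forall_exists_mem_fiber_dist_lt hf (γ t) hr
  refine mem_nhdsWithin_iff.2 ⟨ρ, hρ, fun y ⟨hyx, hyD⟩ => ⟨hyD, ?_⟩⟩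
  by_cases hy : y ∈ (fun q : ℝ × ℝ => f q.1 q.2) '' (Icc 0 1 ×ˢ Icc 0 1)
  · obtain ⟨p, hp, rfl⟩ := hy
    obtain ⟨q, hq, hqx, hpq⟩ := hfiber p hp hyx
    have hseg : JoinedIn (Icc 0 1 ×ˢ Icc 0 1 ∩ ball q r) q p := .of_segment_subset <|
      ((convex_Icc 0 1).prod (convex_Icc 0 1)).inter (convex_ball q r) |>.segment_subset
        ⟨hq, mem_ball_self hr⟩ ⟨hp, hpq⟩
    refine exists_avoiding_path_of_joinedIn ht.1 hm hγ hγD hsep ?_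
    rw [← hqx]
    refine (hseg.map_continuousOn (hf.mono inter_subset_left)).mono ?_
    rintro _ ⟨p', ⟨hp', hp'q⟩, rfl⟩
    exact ⟨hfD _ hp'.1 _ hp'.2, hfr _ hp' _ hq hp'q⟩
  · refine ⟨fun _ => y, continuousOn_const, fun _ _ => hyD, rfl, ?_⟩
    rintro a ha ⟨s, hs, hsa⟩
    exact hy ⟨(s, a), ⟨hs, ha.1, ha.2.trans ht.2⟩, hsa⟩

/-- The contaminated region `C(t)` (points reachable by paths avoiding the
sensor images at all times up to `t`) is open in `D`. -/
theorem stmt10 (D : Set ℂ) (hD : IsCompact D) (f : ℝ → ℝ → ℂ)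
    (hf : ContinuousOn (fun q : ℝ × ℝ => f q.1 q.2) (Icc 0 1 ×ˢ Icc 0 1))
    (hfD : ∀ s ∈ Icc (0:ℝ) 1, ∀ t ∈ Icc (0:ℝ) 1, f s t ∈ D)
    (t : ℝ) (ht : t ∈ Icc (0:ℝ) 1) :
    ∃ V : Set ℂ, IsOpen V ∧
      {x ∈ D | ∃ γ : ℝ → ℂ, ContinuousOn γ (Icc 0 t) ∧ (∀ t' ∈ Icc 0 t, γ t' ∈ D) ∧
        γ t = x ∧ ∀ t' ∈ Icc 0 t, γ t' ∉ (fun s => f s t') '' Icc 0 1} = V ∩ D :=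
  stmt10_general D f hf hfD t ht
end

section
/- Let S¹ denote [0,1] with endpoints identified, and let g : S¹ × [0,1] → ℝ² be continuous. Define d±(x,t) = dist(x, g(S¹ × {t})) if x ∈ g(S¹ × {t}) or the winding number of g(·,t) around x is 0, and d±(x,t) = −dist(x, g(S¹ × {t})) otherwise. Then d± : ℝ² × [0,1] → ℝ is continuous. -/
/-!
The distance from `x` to the loop `g(·, t)` is jointly continuous, because the loops
`g(·, t)` depend uniformly continuously on `t`. On the loop `|d±|` is this distance and
tends to `0`. Off the loop, a small change of `(x, t)` moves `g(s, t) - x` by less than half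
its modulus for all `s`, which keeps both the point off the loop and the winding number, so
`d±` is locally a fixed sign times the distance.
-/

open Set

/-- The loop `γ` (parametrized on `[0,1]`) has winding number `n` around `x`:
there is a continuous polar lifting `γ s - x = r s · exp(θ s · i)` with
`θ 1 - θ 0 = 2πn`. -/
def WindingNumber (γ : ℝ → ℂ) (x : ℂ) (n : ℤ) : Prop :=
  ∃ θ r : ℝ → ℝ, ContinuousOn θ (Icc 0 1) ∧ ContinuousOn r (Icc 0 1) ∧
    (∀ s ∈ Icc (0:ℝ) 1, 0 < r s ∧ γ s - x = r s * Complex.exp (θ s * Complex.I)) ∧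
    θ 1 - θ 0 = 2 * Real.pi * n

open Metric Filter Topology Complex

theorem WindingNumber.continuousOn {γ : ℝ → ℂ} {x : ℂ} {n : ℤ} (hW : WindingNumber γ x n) :
    ContinuousOn γ (Icc 0 1) := by
  obtain ⟨θ, r, hθ, hr, hpolar, -⟩ := hW
  have : ContinuousOn (fun s => x + (r s : ℂ) * exp (θ s * I)) (Icc 0 1) := by fun_prop
  exact this.congr fun s hs => by simp only [← (hpolar s hs).2, add_sub_cancel]

/-- Multiplying the lifting by `q = (γ' - x') / (γ - x)`, whose values lie in the disc of
radius one around `1`, adds `arg q` to the angle; since `q 0 = q 1` the total change is kept. -/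
theorem WindingNumber.of_norm_sub_lt {γ γ' : ℝ → ℂ} {x x' : ℂ} {n : ℤ}
    (hW : WindingNumber γ x n) (hγ' : ContinuousOn γ' (Icc 0 1))
    (hl : γ 0 = γ 1) (hl' : γ' 0 = γ' 1)
    (hclose : ∀ s ∈ Icc (0:ℝ) 1, ‖(γ' s - x') - (γ s - x)‖ < ‖γ s - x‖) :
    WindingNumber γ' x' n := by
  have hne : ∀ s ∈ Icc (0:ℝ) 1, γ s - x ≠ 0 := fun s hs h =>
    (norm_nonneg _).not_gt (by simpa [h] using hclose s hs)
  set q : ℝ → ℂ := fun s => (γ' s - x') / (γ s - x) with hq_def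
  have hq : ContinuousOn q (Icc 0 1) :=
    (hγ'.sub continuousOn_const).div (hW.continuousOn.sub continuousOn_const) hne
  have hq_slit : ∀ s ∈ Icc (0:ℝ) 1, q s ∈ slitPlane := fun s hs => by
    have : ‖q s - 1‖ < 1 := by
      rw [hq_def, div_sub_one (hne s hs), norm_div, div_lt_one (norm_pos_iff.2 (hne s hs))]
      exact hclose s hs
    simpa using mem_slitPlane_of_norm_lt_one this
  obtain ⟨θ, r, hθ, hr, hpolar, hθ01⟩ := hW
  refine ⟨fun s => θ s + arg (q s), fun s => r s * ‖q s‖, ?_, hr.mul hq.norm,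
    fun s hs => ⟨?_, ?_⟩, ?_⟩
  · exact hθ.add fun s hs => (continuousAt_arg (hq_slit s hs)).comp_continuousWithinAt (hq s hs)
  · exact mul_pos (hpolar s hs).1 (norm_pos_iff.2 (slitPlane_ne_zero (hq_slit s hs)))
  · calc γ' s - x' = q s * (γ s - x) := (div_mul_cancel₀ _ (hne s hs)).symm
      _ = _ := by
        rw [(hpolar s hs).2, ← norm_mul_exp_arg_mul_I (q s)]
        push_cast
        rw [add_mul, exp_add]
        ring
  · have hq01 : q 0 = q 1 := by simp only [hq_def, hl, hl']
    simp only [hq01]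
    linarith

theorem windingNumber_iff_of_two_mul_norm_sub_lt {γ γ' : ℝ → ℂ} {x x' : ℂ} {n : ℤ}
    (hγ : ContinuousOn γ (Icc 0 1)) (hγ' : ContinuousOn γ' (Icc 0 1))
    (hl : γ 0 = γ 1) (hl' : γ' 0 = γ' 1)
    (hclose : ∀ s ∈ Icc (0:ℝ) 1, 2 * ‖(γ' s - x') - (γ s - x)‖ < ‖γ s - x‖) :
    WindingNumber γ' x' n ↔ WindingNumber γ x n := by
  refine ⟨fun hW => hW.of_norm_sub_lt hγ hl' hl fun s hs => ?_,
    fun hW => hW.of_norm_sub_lt hγ' hl hl' fun s hs => ?_⟩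
  · rw [norm_sub_rev]
    linarith [hclose s hs, norm_sub_norm_le (γ s - x) (γ' s - x'),
      norm_sub_rev (γ s - x) (γ' s - x')]
  · linarith [hclose s hs, norm_nonneg ((γ' s - x') - (γ s - x))]

theorem TendstoUniformlyOn.eventually_windingNumber_iff {α : Type*} {l : Filter α}
    {c : α → ℝ → ℂ} {x : α → ℂ} {γ : ℝ → ℂ} {x₀ : ℂ} (n : ℤ)
    (hu : TendstoUniformlyOn (fun a s => c a s - x a) (fun s => γ s - x₀) l (Icc 0 1))
    (hc : ∀ᶠ a in l, ContinuousOn (c a) (Icc 0 1) ∧ c a 0 = c a 1)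
    (hγ : ContinuousOn γ (Icc 0 1)) (hγl : γ 0 = γ 1) (hx₀ : x₀ ∉ γ '' Icc 0 1) :
    ∀ᶠ a in l, x a ∉ c a '' Icc 0 1 ∧ (WindingNumber (c a) (x a) n ↔ WindingNumber γ x₀ n) := by
  have hm : 0 < infDist x₀ (γ '' Icc 0 1) :=
    ((isCompact_Icc.image_of_continuousOn hγ).isClosed.notMem_iff_infDist_pos
      ((nonempty_Icc.2 zero_le_one).image γ)).1 hx₀
  filter_upwards [Metric.tendstoUniformlyOn_iff.1 hu _ (half_pos hm), hc]
    with a hnear ⟨hca, hla⟩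
  have hclose : ∀ s ∈ Icc (0:ℝ) 1, 2 * ‖(c a s - x a) - (γ s - x₀)‖ < ‖γ s - x₀‖ := by
    intro s hs
    have hdist := infDist_le_dist_of_mem (x := x₀) (mem_image_of_mem γ hs)
    have hnear_s := hnear s hs
    rw [dist_comm, dist_eq_norm] at hdist
    rw [dist_eq_norm, norm_sub_rev] at hnear_s
    linarith
  refine ⟨?_, windingNumber_iff_of_two_mul_norm_sub_lt hγ hca hγl hla hclose⟩
  rintro ⟨s, hs, hsx⟩
  have := hclose s hs
  rw [hsx, sub_self, zero_sub, norm_neg] at this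
  linarith [norm_nonneg (γ s - x₀)]

theorem infDist_image_le_infDist_image_add {ι E : Type*} [SeminormedAddCommGroup E]
    {f f' : ι → E} {s : Set ι} {x x' : E} {ε : ℝ} (hs : s.Nonempty)
    (h : ∀ i ∈ s, ‖(f i - x) - (f' i - x')‖ ≤ ε) :
    infDist x (f '' s) ≤ infDist x' (f' '' s) + ε := by
  rw [← sub_le_iff_le_add, le_infDist (hs.image f')]
  rintro _ ⟨i, hi, rfl⟩
  have hdist := infDist_le_dist_of_mem (x := x) (mem_image_of_mem f hi)
  rw [dist_comm, dist_eq_norm] at hdist ⊢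
  linarith [h i hi, norm_sub_norm_le (f i - x) (f' i - x')]

theorem TendstoUniformlyOn.tendsto_infDist_image {α ι E : Type*} [SeminormedAddCommGroup E]
    {l : Filter α} {F : α → ι → E} {f : ι → E} {y : α → E} {x : E} {s : Set ι}
    (hu : TendstoUniformlyOn (fun a i => F a i - y a) (fun i => f i - x) l s)
    (hs : s.Nonempty) :
    Tendsto (fun a => infDist (y a) (F a '' s)) l (𝓝 (infDist x (f '' s))) := by
  rw [Metric.tendsto_nhds]
  intro ε hε
  filter_upwards [Metric.tendstoUniformlyOn_iff.1 hu _ (half_pos hε)] with a ha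
  have hle : ∀ i ∈ s, ‖(F a i - y a) - (f i - x)‖ ≤ ε / 2 := fun i hi => by
    rw [← dist_eq_norm, dist_comm]
    exact (ha i hi).le
  rw [Real.dist_eq, abs_sub_lt_iff]
  constructor <;> linarith [infDist_image_le_infDist_image_add hs hle,
    infDist_image_le_infDist_image_add hs fun i hi => (norm_sub_rev _ _).trans_le (hle i hi)]

theorem IsCompact.tendstoUniformlyOn_of_continuousOn_prod {α β E : Type*} [TopologicalSpace α]
    [TopologicalSpace β] [UniformSpace E] {f : α → β → E} {s : Set α} {k : Set β} {q : α}
    (hk : IsCompact k) (hf : ContinuousOn f.uncurry (s ×ˢ k)) (hq : q ∈ s) :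
    TendstoUniformlyOn f (f q) (𝓝[s] q) k := fun u hu => by
  obtain ⟨v, hv, hvu⟩ := hk.mem_uniformity_of_prod hf hq (tendsto_swap_uniformity hu)
  exact mem_of_superset hv fun p hp x hx => hvu p hp x hx

theorem ContinuousWithinAt.of_norm_le_of_eq_zero {X E : Type*} [TopologicalSpace X]
    [NormedAddCommGroup E] {f : X → E} {F : X → ℝ} {s : Set X} {a : X}
    (hF : ContinuousWithinAt F s a) (hle : ∀ x ∈ s, ‖f x‖ ≤ F x) (ha : a ∈ s) (hFa : F a = 0) :
    ContinuousWithinAt f s a := by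
  rw [ContinuousWithinAt, hFa] at hF
  rw [ContinuousWithinAt, norm_le_zero_iff.1 ((hle a ha).trans_eq hFa)]
  exact squeeze_zero_norm' (eventually_nhdsWithin_of_forall hle) hF

/-- The signed distance `d±(x,t)` to the moving loop `g(·,t)`, negative exactly
on points with nonzero winding number, is continuous. -/
theorem stmt12 (g : ℝ → ℝ → ℂ)
    (hg : ContinuousOn (fun q : ℝ × ℝ => g q.1 q.2) (Icc 0 1 ×ˢ Icc 0 1))
    (hloop : ∀ t ∈ Icc (0:ℝ) 1, g 0 t = g 1 t)
    (dpm : ℂ → ℝ → ℝ)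
    (h1 : ∀ x : ℂ, ∀ t ∈ Icc (0:ℝ) 1,
      (x ∈ (fun s => g s t) '' Icc 0 1 ∨ WindingNumber (fun s => g s t) x 0) →
      dpm x t = Metric.infDist x ((fun s => g s t) '' Icc 0 1))
    (h2 : ∀ x : ℂ, ∀ t ∈ Icc (0:ℝ) 1,
      x ∉ (fun s => g s t) '' Icc 0 1 → ¬ WindingNumber (fun s => g s t) x 0 →
      dpm x t = - Metric.infDist x ((fun s => g s t) '' Icc 0 1)) :
    ContinuousOn (fun q : ℂ × ℝ => dpm q.1 q.2) (univ ×ˢ Icc 0 1) := by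
  set S : Set (ℂ × ℝ) := univ ×ˢ Icc 0 1
  have hcurve : ∀ t ∈ Icc (0:ℝ) 1, ContinuousOn (fun s => g s t) (Icc 0 1) ∧ g 0 t = g 1 t :=
    fun t ht => ⟨hg.comp (continuous_id.prodMk continuous_const).continuousOn
      fun s hs => ⟨hs, ht⟩, hloop t ht⟩
  have hu : ∀ q ∈ S, TendstoUniformlyOn (fun p s => g s p.2 - p.1) (fun s => g s q.2 - q.1)
      (𝓝[S] q) (Icc 0 1) := fun q hq =>
    isCompact_Icc.tendstoUniformlyOn_of_continuousOn_prod
      ((hg.comp (continuous_snd.prodMk continuous_fst.snd).continuousOn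
        fun p hp => ⟨hp.2, hp.1.2⟩).sub continuous_fst.fst.continuousOn) hq
  have hF : ContinuousOn (fun q : ℂ × ℝ => infDist q.1 ((fun s => g s q.2) '' Icc 0 1)) S :=
    fun q hq => (hu q hq).tendsto_infDist_image (nonempty_Icc.2 zero_le_one)
  have habs : ∀ q ∈ S, ‖dpm q.1 q.2‖ = infDist q.1 ((fun s => g s q.2) '' Icc 0 1) := by
    rintro ⟨x, t⟩ ⟨-, ht⟩
    by_cases h : x ∈ (fun s => g s t) '' Icc 0 1 ∨ WindingNumber (fun s => g s t) x 0
    · rw [h1 x t ht h, Real.norm_of_nonneg infDist_nonneg]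
    · obtain ⟨hx, hw⟩ := not_or.1 h
      rw [h2 x t ht hx hw, norm_neg, Real.norm_of_nonneg infDist_nonneg]
  rintro ⟨x₀, t₀⟩ hq₀
  have ht₀ : t₀ ∈ Icc (0:ℝ) 1 := hq₀.2
  by_cases hx₀ : x₀ ∈ (fun s => g s t₀) '' Icc 0 1
  · exact (hF _ hq₀).of_norm_le_of_eq_zero (fun q hq => (habs q hq).le) hq₀
      (infDist_zero_of_mem hx₀)
  · have hev := (hu _ hq₀).eventually_windingNumber_iff (c := fun p s => g s p.2) (x := Prod.fst)
      0 (eventually_nhdsWithin_of_forall fun q hq => hcurve q.2 hq.2) (hcurve t₀ ht₀).1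
      (hcurve t₀ ht₀).2 hx₀
    by_cases hw₀ : WindingNumber (fun s => g s t₀) x₀ 0
    · refine (hF _ hq₀).congr_of_eventuallyEq ?_ (h1 x₀ t₀ ht₀ (.inr hw₀))
      filter_upwards [hev, self_mem_nhdsWithin] with q hq hqS
      exact h1 q.1 q.2 hqS.2 (.inr (hq.2.2 hw₀))
    · refine (hF _ hq₀).neg.congr_of_eventuallyEq ?_ (h2 x₀ t₀ ht₀ hx₀ hw₀)
      filter_upwards [hev, self_mem_nhdsWithin] with q hq hqS
      exact h2 q.1 q.2 hqS.2 hq.1 (hw₀ ∘ hq.2.1)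
end

section
/- Let α, β : [0,1] → S¹ be continuous paths on the circle with α(0) = β(0) and α(1) = β(1), and suppose the winding number of the loop α·β⁻¹ satisfies |wn(α·β⁻¹)| ≥ 2. Then there exists t ∈ (0,1) such that α(t) = β(t) and the restricted loop α|_{[0,t]}·(β|_{[0,t]})⁻¹ has winding number ±1. -/
open Set

/-- If `α, β : [0,1] → S¹` share endpoints (via liftings `a, b` with
`a 0 = b 0`) and the loop `α·β⁻¹` has winding number of absolute value at least
`2` (i.e. `a 1 - b 1 = 2πk` with `|k| ≥ 2`), then there is `t ∈ (0,1)` with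
`α t = β t` and the restricted loop having winding number `±1`
(i.e. `a t - b t = ±2π`). -/
theorem stmt15 (α β : ℝ → ℂ) (a b : ℝ → ℝ)
    (ha : ContinuousOn a (Icc 0 1)) (hb : ContinuousOn b (Icc 0 1))
    (hα : ∀ t ∈ Icc (0:ℝ) 1, α t = Complex.exp (a t * Complex.I))
    (hβ : ∀ t ∈ Icc (0:ℝ) 1, β t = Complex.exp (b t * Complex.I))
    (h0 : a 0 = b 0)
    (hk : ∃ k : ℤ, a 1 - b 1 = 2 * Real.pi * k ∧ 2 ≤ |k|) :
    ∃ t ∈ Ioo (0:ℝ) 1, α t = β t ∧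
      (a t - b t = 2 * Real.pi ∨ a t - b t = -(2 * Real.pi)) := by
  obtain ⟨k, hk1, hk2⟩ := hk
  have hf : ContinuousOn (fun t => a t - b t) (Icc 0 1) := ha.sub hb
  have hpi := Real.pi_pos
  -- helper converting f t = ±2π into the conclusion
  have key : ∀ t ∈ Ioo (0:ℝ) 1,
      (a t - b t = 2 * Real.pi ∨ a t - b t = -(2 * Real.pi)) →
      ∃ t ∈ Ioo (0:ℝ) 1, α t = β t ∧
      (a t - b t = 2 * Real.pi ∨ a t - b t = -(2 * Real.pi)) := by
    intro t ht hcases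
    refine ⟨t, ht, ?_, hcases⟩
    have htI : t ∈ Icc (0:ℝ) 1 := ⟨ht.1.le, ht.2.le⟩
    rw [hα t htI, hβ t htI]
    rcases hcases with h | h
    · have : a t = b t + 2 * Real.pi := by linarith
      rw [this]
      push_cast
      rw [add_mul, Complex.exp_add, Complex.exp_two_pi_mul_I, mul_one]
    · have : a t = b t + (-(2 * Real.pi)) := by linarith
      rw [this]
      push_cast
      rw [add_mul, Complex.exp_add, neg_mul, Complex.exp_neg,
        Complex.exp_two_pi_mul_I, inv_one, mul_one]
  rcases le_or_gt 2 k with hkpos | hkneg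
  · -- k ≥ 2 : f 1 = 2πk ≥ 4π, find t with f t = 2π
    have h2 : (2:ℝ) * Real.pi ∈ Ioo (a 0 - b 0) (a 1 - b 1) := by
      constructor
      · rw [h0]; simp; positivity
      · rw [hk1]
        have : (2:ℝ) ≤ (k:ℝ) := by exact_mod_cast hkpos
        nlinarith
    obtain ⟨t, ht, hft⟩ := intermediate_value_Ioo (by norm_num : (0:ℝ) ≤ 1) hf h2
    exact key t ht (Or.inl hft)
  · -- k ≤ -2 : f 1 ≤ -4π, find t with f t = -2π
    have hkle : k ≤ -2 := by
      rcases le_abs.mp hk2 with h | h <;> omega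
    have h2 : -((2:ℝ) * Real.pi) ∈ Ioo (a 1 - b 1) (a 0 - b 0) := by
      constructor
      · rw [hk1]
        have : (k:ℝ) ≤ -2 := by exact_mod_cast hkle
        nlinarith
      · rw [h0]; simp; positivity
    obtain ⟨t, ht, hft⟩ := intermediate_value_Ioo' (by norm_num : (0:ℝ) ≤ 1) hf h2
    exact key t ht (Or.inr hft)
end

section
/- Let α, β : [0,1] → S¹ be continuous with α(0) = β(0), α(1) = β(1), wn(α·β⁻¹) = 0, and suppose that for every t ∈ [0,1] with α(t) = β(t), the loop α|_{[0,t]}·(β|_{[0,t]})⁻¹ has winding number 0. Then there exists a continuous path γ : [0,1] → S¹ with γ(t) ∉ {α(t), β(t)} for all t ∈ [0,1]. -/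
open Set Real

/-!
A meeting time with `a t - b t ∈ 2πℤ` forces `a t = b t`, so by the intermediate value theorem the
difference of the lifts, which starts at `0`, never reaches `±2π`: `|a t - b t| < 2π` throughout.
The evader then sits at the antipode of the midpoint, `exp (((a t + b t) / 2 + π) i)`, whose angle
differs from each of `a t` and `b t` by an amount in the open interval `(0, 2π)`.
-/

lemma Complex.exp_ofReal_mul_I_ne {x y : ℝ} (hxy : x ≠ y) (h : |x - y| < 2 * π) :
    Complex.exp (x * Complex.I) ≠ Complex.exp (y * Complex.I) := by
  intro heq
  refine hxy <| Circle.exp_injOn_of_forall_sub_mem_Ioo (s := {x, y}) ?_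
    (mem_insert x _) (mem_insert_of_mem x rfl) (Subtype.ext heq)
  have hxy' : |y - x| < 2 * π := abs_sub_comm x y ▸ h
  have := pi_pos
  simp only [mem_insert_iff, mem_singleton_iff]
  rintro u (rfl | rfl) v (rfl | rfl) <;> rw [neg_mul, mem_Ioo, ← abs_lt] <;> simp [*]

lemma ContinuousOn.lt_on_Icc_of_ne {f : ℝ → ℝ} {a b c : ℝ} (hf : ContinuousOn f (Icc a b))
    (ha : f a < c) (hne : ∀ t ∈ Icc a b, f t ≠ c) : ∀ t ∈ Icc a b, f t < c := by
  intro t ht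
  by_contra! hct
  obtain ⟨s, hs, hfs⟩ :=
    intermediate_value_Icc ht.1 (hf.mono (Icc_subset_Icc le_rfl ht.2)) ⟨ha.le, hct⟩
  exact hne s ⟨hs.1, hs.2.trans ht.2⟩ hfs

theorem stmt16_general (α β : ℝ → ℂ) (a b : ℝ → ℝ)
    (ha : ContinuousOn a (Icc 0 1)) (hb : ContinuousOn b (Icc 0 1))
    (hα : ∀ t ∈ Icc (0:ℝ) 1, α t = Complex.exp (a t * Complex.I))
    (hβ : ∀ t ∈ Icc (0:ℝ) 1, β t = Complex.exp (b t * Complex.I))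
    (h0 : a 0 = b 0)
    (hpartial : ∀ t ∈ Icc (0:ℝ) 1, (∃ k : ℤ, a t - b t = 2 * Real.pi * k) → a t = b t) :
    ∃ γ : ℝ → ℂ, ContinuousOn γ (Icc 0 1) ∧
      ∀ t ∈ Icc (0:ℝ) 1, ‖γ t‖ = 1 ∧ γ t ≠ α t ∧ γ t ≠ β t := by
  have hπ := pi_pos
  have hclose : ∀ t ∈ Icc (0:ℝ) 1, |a t - b t| < 2 * π := by
    refine ContinuousOn.lt_on_Icc_of_ne (f := fun t => |a t - b t|) (ha.sub hb).abs
      (by simp [h0, hπ]) fun t ht habs => ?_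
    have hk : ∃ k : ℤ, a t - b t = 2 * π * k := by
      rcases abs_eq (by positivity) |>.mp habs with h | h
      exacts [⟨1, by simp [h]⟩, ⟨-1, by simp [h]⟩]
    simp [hpartial t ht hk, hπ.ne'] at habs
  refine ⟨fun t => Complex.exp (((a t + b t) / 2 + π : ℝ) * Complex.I), ?_, fun t ht => ?_⟩
  · fun_prop (disch := assumption)
  · obtain ⟨hlo, hhi⟩ := abs_lt.mp (hclose t ht)
    refine ⟨Complex.norm_exp_ofReal_mul_I _, ?_, ?_⟩
    · rw [hα t ht]
      exact Complex.exp_ofReal_mul_I_ne (by linarith) (abs_lt.mpr ⟨by linarith, by linarith⟩)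
    · rw [hβ t ht]
      exact Complex.exp_ofReal_mul_I_ne (by linarith) (abs_lt.mpr ⟨by linarith, by linarith⟩)

/-- One-dimensional evasion on the circle: if the two moving sensor points
`α t, β t ∈ S¹` (with liftings `a, b`, starting and ending together, with the
total loop `α·β⁻¹` having winding number `0`, and every partial loop at a
meeting time having winding number `0`), then there is a continuously moving
evader `γ : [0,1] → S¹` avoiding both sensors at all times. -/
theorem stmt16 (α β : ℝ → ℂ) (a b : ℝ → ℝ)
    (ha : ContinuousOn a (Icc 0 1)) (hb : ContinuousOn b (Icc 0 1))
    (hα : ∀ t ∈ Icc (0:ℝ) 1, α t = Complex.exp (a t * Complex.I))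
    (hβ : ∀ t ∈ Icc (0:ℝ) 1, β t = Complex.exp (b t * Complex.I))
    (h0 : a 0 = b 0) (h1 : a 1 = b 1)
    (hpartial : ∀ t ∈ Icc (0:ℝ) 1, (∃ k : ℤ, a t - b t = 2 * Real.pi * k) → a t = b t) :
    ∃ γ : ℝ → ℂ, ContinuousOn γ (Icc 0 1) ∧
      ∀ t ∈ Icc (0:ℝ) 1, ‖γ t‖ = 1 ∧ γ t ≠ α t ∧ γ t ≠ β t :=
  stmt16_general α β a b ha hb hα hβ h0 hpartial
end
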